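/- Let Z be a finite nonempty set, ∼ an equivalence relation on Z, c : Z × Z → ℝ a cost function, and p, q ∈ Δ(Z). Let D_∼ = {(z,z') ∈ Z × Z : z ∼ z'}. If D_∼ is c-cyclically monotone, then there exists a c-optimal coupling γ of p and q such that 1 − Σ_{(z,z')∈D_∼} γ(z,z') ≤ (|Z/∼| − 1)·‖proj_∼ q − proj_∼ p‖, where Z/∼ is the set of equivalence classes and proj_∼ p ∈ Δ(Z/∼) is defined by (proj_∼ p)([z]) = Σ_{z' ∼ z} p(z'). -/

import Mathlib

open Finset

/-- `p` is a probability vector on the finite set `Z`. -/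
def IsProbVec {Z : Type*} [Fintype Z] (p : Z → ℝ) : Prop :=
  (∀ z, 0 ≤ p z) ∧ ∑ z, p z = 1

/-- Total variation distance `‖p − q‖ = (1/2)·Σ_z |p z − q z|`. -/
noncomputable def tv {Z : Type*} [Fintype Z] (p q : Z → ℝ) : ℝ :=
  (∑ z, |p z - q z|) / 2

/-- `γ` is a coupling of `p` and `q`. -/
def IsCoupling {X Y : Type*} [Fintype X] [Fintype Y]
    (γ : X → Y → ℝ) (p : X → ℝ) (q : Y → ℝ) : Prop :=
  (∀ x y, 0 ≤ γ x y) ∧ (∀ x, ∑ y, γ x y = p x) ∧ (∀ y, ∑ x, γ x y = q y)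

/-- Total transport cost of `γ` under the cost function `c`. -/
noncomputable def transportCost {X Y : Type*} [Fintype X] [Fintype Y]
    (c : X → Y → ℝ) (γ : X → Y → ℝ) : ℝ :=
  ∑ x, ∑ y, c x y * γ x y

/-- `γ` is a `c`-optimal coupling of `p` and `q`. -/
def IsOptimalCoupling {X Y : Type*} [Fintype X] [Fintype Y]
    (c : X → Y → ℝ) (γ : X → Y → ℝ) (p : X → ℝ) (q : Y → ℝ) : Prop :=
  IsCoupling γ p q ∧
    ∀ γ' : X → Y → ℝ, IsCoupling γ' p q → transportCost c γ ≤ transportCost c γ'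

/-- The set `S ⊆ Z × Z` is `c`-cyclically monotone. -/
def CyclMono {Z : Type*} (c : Z → Z → ℝ) (S : Set (Z × Z)) : Prop :=
  ∀ J : ℕ, ∀ z z' : Fin (J + 2) → Z, (∀ j, (z j, z' j) ∈ S) →
    ∑ j, c (z j) (z' j) ≤ ∑ j, c (z j) (z' (j + 1))

/-- Projection of a probability vector on `Z` to the quotient `Z/∼`:
`(proj s p)([z]) = Σ_{z' ∼ z} p z'`. -/
noncomputable def projQ {Z : Type*} [Fintype Z] (s : Setoid Z)
    [DecidableEq (Quotient s)] (p : Z → ℝ) : Quotient s → ℝ :=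
  fun cls => ∑ z ∈ Finset.univ.filter (fun z => Quotient.mk s z = cls), p z

/-!
Among the `c`-optimal couplings take one, `γ`, maximizing the mass on `D_∼` (compactness). The
graph on the classes with an edge `k → l` whenever `γ` moves mass from `k` to a different class
`l` is acyclic: along a cycle `z₀ → z₀' ∼ z₁ → z₁' ∼ ⋯ ∼ z₀` one can move a little mass from each
pair `(zⱼ, zⱼ')` to `(zⱼ₊₁, zⱼ')`. This keeps the marginals, does not increase the cost since the
new pairs lie in the `c`-cyclically monotone set `D_∼`, and strictly increases the mass on `D_∼`.
Hence the classes can be ranked `0, …, K - 1` so that mass only moves up. A unit of mass that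
leaves its class crosses at least one of the `K - 1` cuts `{rank ≤ t}`; since nothing crosses a
cut downwards, the flow across it is `(p - q)` of the lower side, which is at most the total
variation of the projections.
-/

section Coupling

variable {X Y : Type*} [Fintype X] [Fintype Y]

lemma transportCost_add_smul (f γ h : X → Y → ℝ) (ε : ℝ) :
    transportCost f (γ + ε • h) = transportCost f γ + ε * transportCost f h := by
  simp only [transportCost, Pi.add_apply, Pi.smul_apply, smul_eq_mul, Finset.mul_sum,
    ← Finset.sum_add_distrib]
  exact Finset.sum_congr rfl fun x _ => Finset.sum_congr rfl fun y _ => by ring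

lemma continuous_transportCost (f : X → Y → ℝ) : Continuous (transportCost f) := by
  unfold transportCost
  fun_prop

lemma isCompact_setOf_isCoupling (p : X → ℝ) (q : Y → ℝ) :
    IsCompact {γ : X → Y → ℝ | IsCoupling γ p q} := by
  have hclosed : IsClosed {γ : X → Y → ℝ | IsCoupling γ p q} := by
    simp only [IsCoupling, Set.ofPred_and, Set.ofPred_forall]
    refine .inter (isClosed_iInter fun x => isClosed_iInter fun y => isClosed_le ?_ ?_)
      (.inter (isClosed_iInter fun x => isClosed_eq ?_ ?_)
        (isClosed_iInter fun y => isClosed_eq ?_ ?_)) <;> fun_prop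
  refine (isCompact_univ_pi fun x => isCompact_univ_pi fun _ =>
      isCompact_Icc (a := 0) (b := p x)).of_isClosed_subset hclosed fun γ ⟨hγ0, hγp, _⟩ => ?_
  simp only [Set.mem_pi, Set.mem_univ, Set.mem_Icc, forall_const]
  exact fun x y => ⟨hγ0 x y, hγp x ▸ Finset.single_le_sum (fun y _ => hγ0 x y) (mem_univ y)⟩

lemma isCoupling_mul {p : X → ℝ} {q : Y → ℝ} (hp : IsProbVec p) (hq : IsProbVec q) :
    IsCoupling (fun x y => p x * q y) p q :=
  ⟨fun x y => mul_nonneg (hp.1 x) (hq.1 y),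
    fun x => by rw [← Finset.mul_sum, hq.2, mul_one],
    fun y => by rw [← Finset.sum_mul, hp.2, one_mul]⟩

lemma isCompact_setOf_isOptimalCoupling (c : X → Y → ℝ) (p : X → ℝ) (q : Y → ℝ) :
    IsCompact {γ | IsOptimalCoupling c γ p q} := by
  have hcpt := isCompact_setOf_isCoupling p q
  refine hcpt.of_isClosed_subset ?_ fun γ hγ => hγ.1
  simp only [IsOptimalCoupling, Set.ofPred_and, Set.ofPred_forall]
  exact hcpt.isClosed.inter (isClosed_iInter fun γ' => isClosed_iInter fun _ =>
    isClosed_le (continuous_transportCost c) continuous_const)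

lemma exists_isOptimalCoupling_isMaxOn (c g : X → Y → ℝ) {p : X → ℝ} {q : Y → ℝ}
    (hp : IsProbVec p) (hq : IsProbVec q) :
    ∃ γ, IsOptimalCoupling c γ p q ∧
      IsMaxOn (transportCost g) {γ' | IsOptimalCoupling c γ' p q} γ := by
  obtain ⟨γ₀, hγ₀, hmin⟩ := (isCompact_setOf_isCoupling p q).exists_isMinOn
    ⟨_, isCoupling_mul hp hq⟩ (continuous_transportCost c).continuousOn
  exact (isCompact_setOf_isOptimalCoupling c p q).exists_isMaxOn
    ⟨γ₀, hγ₀, fun γ' hγ' => hmin hγ'⟩ (continuous_transportCost g).continuousOn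

end Coupling

section Cycle

variable {Z : Type*} [Fintype Z] [DecidableEq Z] {n : ℕ} [NeZero n]

def cycleShift (z z' : Fin n → Z) : Z → Z → ℝ :=
  fun x y => ∑ j, ((if x = z (j + 1) ∧ y = z' j then 1 else 0) -
    (if x = z j ∧ y = z' j then 1 else 0))

lemma transportCost_cycleShift (f : Z → Z → ℝ) (z z' : Fin n → Z) :
    transportCost f (cycleShift z z') = ∑ j, (f (z (j + 1)) (z' j) - f (z j) (z' j)) := by
  simp only [transportCost, cycleShift, Finset.mul_sum]
  rw [Finset.sum_congr rfl fun x _ => Finset.sum_comm, Finset.sum_comm]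
  refine Finset.sum_congr rfl fun j _ => ?_
  simp [mul_sub, Finset.sum_sub_distrib, ite_and]

lemma sum_cycleShift_left (z z' : Fin n → Z) (x : Z) : ∑ y, cycleShift z z' x y = 0 := by
  simp only [cycleShift]
  rw [Finset.sum_comm]
  simp only [Finset.sum_sub_distrib, ite_and, Finset.sum_ite_irrel, Finset.sum_ite_eq',
    mem_univ, if_true, Finset.sum_const_zero]
  exact sub_eq_zero.mpr
    (Equiv.sum_comp (Equiv.addRight 1) fun j => if x = z j then (1 : ℝ) else 0)

lemma sum_cycleShift_right (z z' : Fin n → Z) (y : Z) : ∑ x, cycleShift z z' x y = 0 := by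
  simp only [cycleShift]
  rw [Finset.sum_comm]
  simp [ite_and, Finset.sum_sub_distrib]

lemma IsCoupling.exists_add_smul_cycleShift {γ : Z → Z → ℝ} {p q : Z → ℝ}
    (hγ : IsCoupling γ p q) (z z' : Fin n → Z) (hpos : ∀ j, 0 < γ (z j) (z' j)) :
    ∃ ε : ℝ, 0 < ε ∧ IsCoupling (γ + ε • cycleShift z z') p q := by
  obtain ⟨j₀, hj₀⟩ := Finite.exists_min fun j => γ (z j) (z' j)
  have hn : (0 : ℝ) < n := by exact_mod_cast Nat.pos_of_neZero n
  set ε := γ (z j₀) (z' j₀) / n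
  have hε : 0 < ε := div_pos (hpos j₀) hn
  refine ⟨ε, hε, fun x y => ?_, fun x => ?_, fun y => ?_⟩
  · -- each of the `n` pairs of the cycle takes at most `γ x y / n` away from `(x, y)`
    have hremoved : ∀ j, ε * (if x = z j ∧ y = z' j then 1 else 0) ≤ γ x y / n := by
      intro j
      split_ifs with h
      · obtain ⟨rfl, rfl⟩ := h
        simpa [ε] using div_le_div_of_nonneg_right (hj₀ j) hn.le
      · simpa using div_nonneg (hγ.1 x y) hn.le
    have hadded : ∀ j, 0 ≤ ε * (if x = z (j + 1) ∧ y = z' j then 1 else 0) := fun j =>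
      mul_nonneg hε.le (by split_ifs <;> norm_num)
    have htotal : ∑ _j : Fin n, γ x y / n = γ x y := by
      rw [Finset.sum_const, Finset.card_univ, Fintype.card_fin, nsmul_eq_mul,
        mul_div_cancel₀ _ hn.ne']
    simp only [cycleShift, Pi.add_apply, Pi.smul_apply, smul_eq_mul, Finset.mul_sum, mul_sub,
      Finset.sum_sub_distrib]
    linarith [Finset.sum_le_sum fun j (_ : j ∈ univ) => hremoved j,
      Finset.sum_nonneg fun j (_ : j ∈ univ) => hadded j]
  · simp [Finset.sum_add_distrib, ← Finset.mul_sum, sum_cycleShift_left, hγ.2.1 x]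
  · simp [Finset.sum_add_distrib, ← Finset.mul_sum, sum_cycleShift_right, hγ.2.2 y]

end Cycle

lemma IsOptimalCoupling.sum_rotate_le {Z : Type*} [Fintype Z] {n : ℕ} [NeZero n]
    {c g γ : Z → Z → ℝ} {p q : Z → ℝ} (hopt : IsOptimalCoupling c γ p q)
    (hmax : IsMaxOn (transportCost g) {γ' | IsOptimalCoupling c γ' p q} γ)
    (z z' : Fin n → Z) (hpos : ∀ j, 0 < γ (z j) (z' j))
    (hc : ∑ j, c (z (j + 1)) (z' j) ≤ ∑ j, c (z j) (z' j)) :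
    ∑ j, g (z (j + 1)) (z' j) ≤ ∑ j, g (z j) (z' j) := by
  classical
  obtain ⟨ε, hε, hcoup⟩ := hopt.1.exists_add_smul_cycleShift z z' hpos
  have hcost : transportCost c (γ + ε • cycleShift z z') ≤ transportCost c γ := by
    rw [transportCost_add_smul, transportCost_cycleShift, Finset.sum_sub_distrib]
    nlinarith
  have hg : transportCost g (γ + ε • cycleShift z z') ≤ transportCost g γ :=
    hmax (show IsOptimalCoupling c _ p q from ⟨hcoup, fun γ' hγ' => hcost.trans (hopt.2 γ' hγ')⟩)
  rw [transportCost_add_smul, transportCost_cycleShift, Finset.sum_sub_distrib] at hg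
  nlinarith

open Relation in
lemma exists_rank_lt_card_of_not_transGen_self {α : Type*} [Fintype α] {r : α → α → Prop}
    (hr : ∀ a, ¬ TransGen r a a) :
    ∃ φ : α → ℕ, (∀ a, φ a < Fintype.card α) ∧ ∀ a b, r a b → φ a < φ b := by
  classical
  refine ⟨fun a => #{b | TransGen r b a}, fun a => card_lt_univ_of_notMem (x := a) ?_,
    fun a b hab => card_lt_card ?_⟩
  · simpa using hr a
  · refine (ssubset_iff_of_subset fun c hc => ?_).2 ⟨a, ?_, ?_⟩
    · simp only [mem_filter, mem_univ, true_and] at hc ⊢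
      exact hc.tail hab
    · simpa using TransGen.single hab
    · simpa using hr a

section Quotient

variable {Z : Type*} (s : Setoid Z)

def ClassEdge (γ : Z → Z → ℝ) (k l : Quotient s) : Prop :=
  k ≠ l ∧ ∃ x y, Quotient.mk s x = k ∧ Quotient.mk s y = l ∧ 0 < γ x y

open Relation in
lemma exists_walk_of_transGen_classEdge {γ : Z → Z → ℝ} {k l : Quotient s}
    (h : TransGen (ClassEdge s γ) k l) :
    ∃ n, ∃ z z' : Fin (n + 1) → Z,
      Quotient.mk s (z 0) = k ∧ Quotient.mk s (z' (Fin.last n)) = l ∧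
      (∀ j, 0 < γ (z j) (z' j)) ∧ (∀ j, ¬ s.r (z j) (z' j)) ∧
      ∀ j : Fin n, s.r (z' j.castSucc) (z j.succ) := by
  induction h with
  | single h =>
    obtain ⟨hne, x, y, rfl, rfl, hpos⟩ := h
    exact ⟨0, fun _ => x, fun _ => y, rfl, rfl, fun _ => hpos,
      fun _ hr => hne (Quotient.sound hr), Fin.elim0⟩
  | tail _ h ih =>
    obtain ⟨n, z, z', hz0, hzl, hpos, hoff, hlink⟩ := ih
    obtain ⟨hne, x, y, rfl, rfl, hxy⟩ := h
    refine ⟨n + 1, Fin.snoc z x, Fin.snoc z' y, ?_, by simp, fun j => ?_, fun j => ?_,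
      fun j => ?_⟩
    · rwa [← Fin.castSucc_zero, Fin.snoc_castSucc]
    · induction j using Fin.lastCases <;> simp [hpos, hxy]
    · induction j using Fin.lastCases with
      | last => simpa using fun hr => hne (Quotient.sound hr)
      | cast i => simpa using hoff i
    · induction j using Fin.lastCases with
      | last =>
        rw [Fin.succ_last, Fin.snoc_castSucc, Fin.snoc_last]
        exact Quotient.exact hzl
      | cast i =>
        rw [Fin.succ_castSucc, Fin.snoc_castSucc, Fin.snoc_castSucc]
        exact hlink i

end Quotient

section Acyclic

variable {Z : Type*} [Fintype Z] (s : Setoid Z) [DecidableRel s.r] {c γ : Z → Z → ℝ}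
  {p q : Z → ℝ}

lemma IsOptimalCoupling.not_forall_rel_cycle (hS : CyclMono c {zz : Z × Z | s.r zz.1 zz.2})
    (hopt : IsOptimalCoupling c γ p q)
    (hmax : IsMaxOn (transportCost fun x y => if s.r x y then 1 else 0)
      {γ' | IsOptimalCoupling c γ' p q} γ)
    {n : ℕ} (z z' : Fin (n + 1) → Z) (hpos : ∀ j, 0 < γ (z j) (z' j))
    (hoff : ∀ j, ¬ s.r (z j) (z' j)) : ¬ ∀ j, s.r (z' j) (z (j + 1)) := by
  intro hlink
  cases n with
  | zero => exact hoff 0 (s.symm (by simpa using hlink 0))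
  | succ m =>
    have hc : ∑ j, c (z (j + 1)) (z' j) ≤ ∑ j, c (z j) (z' j) :=
      calc ∑ j, c (z (j + 1)) (z' j) ≤ ∑ j, c (z (j + 1)) (z' (j + 1)) :=
            hS m (fun j => z (j + 1)) z' fun j => s.symm (hlink j)
        _ = ∑ j, c (z j) (z' j) := Equiv.sum_comp (Equiv.addRight 1) fun j => c (z j) (z' j)
    have hrel := hopt.sum_rotate_le hmax z z' hpos hc
    simp only [hoff, s.symm (hlink _), if_true, if_false, Finset.sum_const, Finset.card_univ,
      Fintype.card_fin, nsmul_eq_mul, mul_one, mul_zero] at hrel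
    exact hrel.not_gt (by positivity)

open Relation in
lemma IsOptimalCoupling.not_transGen_classEdge_self
    (hS : CyclMono c {zz : Z × Z | s.r zz.1 zz.2}) (hopt : IsOptimalCoupling c γ p q)
    (hmax : IsMaxOn (transportCost fun x y => if s.r x y then 1 else 0)
      {γ' | IsOptimalCoupling c γ' p q} γ)
    (k : Quotient s) : ¬ TransGen (ClassEdge s γ) k k := by
  intro h
  obtain ⟨n, z, z', hz0, hzl, hpos, hoff, hlink⟩ := exists_walk_of_transGen_classEdge s h
  refine hopt.not_forall_rel_cycle s hS hmax z z' hpos hoff fun j => ?_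
  induction j using Fin.lastCases with
  | last => rw [Fin.last_add_one]; exact Quotient.exact (hzl.trans hz0.symm)
  | cast i => rw [Fin.coeSucc_eq_succ]; exact hlink i

lemma exists_isOptimalCoupling_rank [Fintype (Quotient s)] (hp : IsProbVec p) (hq : IsProbVec q)
    (hS : CyclMono c {zz : Z × Z | s.r zz.1 zz.2}) :
    ∃ γ, IsOptimalCoupling c γ p q ∧ ∃ φ : Quotient s → ℕ,
      (∀ k, φ k < Fintype.card (Quotient s)) ∧
      ∀ x y, 0 < γ x y → ¬ s.r x y → φ (Quotient.mk s x) < φ (Quotient.mk s y) := by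
  obtain ⟨γ, hopt, hmax⟩ :=
    exists_isOptimalCoupling_isMaxOn c (fun x y => if s.r x y then 1 else 0) hp hq
  obtain ⟨φ, hφ, hedge⟩ :=
    exists_rank_lt_card_of_not_transGen_self (hopt.not_transGen_classEdge_self s hS hmax)
  exact ⟨γ, hopt, φ, hφ, fun x y hxy hr =>
    hedge _ _ ⟨fun h => hr (Quotient.exact h), x, y, rfl, rfl, hxy⟩⟩

end Acyclic

section Cuts

variable {Z : Type*} [Fintype Z] {γ : Z → Z → ℝ} {p q : Z → ℝ}

lemma IsCoupling.sum_ite_and_not_eq_sum_ite_sub (hγ : IsCoupling γ p q) (A : Z → Prop)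
    [DecidablePred A] (hA : ∀ x y, ¬ A x → A y → γ x y = 0) :
    ∑ x, ∑ y, (if A x ∧ ¬ A y then γ x y else 0) = ∑ x, if A x then p x - q x else 0 := by
  have hterm : ∀ x y, (if A x ∧ ¬ A y then γ x y else 0) =
      (if A x then γ x y else 0) - (if A y then γ x y else 0) := by
    intro x y
    by_cases hx : A x <;> by_cases hy : A y <;> simp [hx, hy, hA x y]
  simp only [hterm, Finset.sum_sub_distrib]
  rw [Finset.sum_comm (f := fun x y => if A y then γ x y else 0)]
  simp only [Finset.sum_ite_irrel, Finset.sum_const_zero, hγ.2.1, hγ.2.2,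
    ← Finset.sum_sub_distrib]
  exact Finset.sum_congr rfl fun x _ => by split_ifs <;> simp

/-- Each pair with `ψ x < ψ y` crosses the cut `{ψ ≤ ψ x}`, and no mass crosses a cut
backwards. -/
lemma IsCoupling.sum_ite_lt_le (hγ : IsCoupling γ p q) {K : ℕ} (ψ : Z → ℕ) (hψ : ∀ x, ψ x < K)
    (hmono : ∀ x y, 0 < γ x y → ψ x ≤ ψ y) :
    ∑ x, ∑ y, (if ψ x < ψ y then γ x y else 0) ≤
      ∑ t ∈ range (K - 1), ∑ x, if ψ x ≤ t then p x - q x else 0 := by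
  have hcross : ∀ x y, (if ψ x < ψ y then γ x y else 0) ≤
      ∑ t ∈ range (K - 1), if ψ x ≤ t ∧ ¬ ψ y ≤ t then γ x y else 0 := by
    intro x y
    split_ifs with hxy
    · have hmem : ψ x ∈ range (K - 1) := mem_range.2 (by have := hψ y; omega)
      refine le_of_eq_of_le (by simp [hxy]) (Finset.single_le_sum (f := fun t =>
        if ψ x ≤ t ∧ ¬ ψ y ≤ t then γ x y else 0) (fun t _ => ?_) hmem)
      split_ifs <;> simp [hγ.1 x y]
    · exact Finset.sum_nonneg fun t _ => by split_ifs <;> simp [hγ.1 x y]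
  calc ∑ x, ∑ y, (if ψ x < ψ y then γ x y else 0)
      ≤ ∑ x, ∑ y, ∑ t ∈ range (K - 1), if ψ x ≤ t ∧ ¬ ψ y ≤ t then γ x y else 0 :=
        Finset.sum_le_sum fun x _ => Finset.sum_le_sum fun y _ => hcross x y
    _ = ∑ t ∈ range (K - 1), ∑ x, ∑ y, if ψ x ≤ t ∧ ¬ ψ y ≤ t then γ x y else 0 := by
        rw [Finset.sum_congr rfl fun x _ => Finset.sum_comm, Finset.sum_comm]
    _ = _ := Finset.sum_congr rfl fun t _ =>
        hγ.sum_ite_and_not_eq_sum_ite_sub (fun x => ψ x ≤ t) fun x y hx hy =>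
          (hγ.1 x y).eq_or_lt.elim Eq.symm fun h => absurd (hy.trans' (hmono x y h)) hx

end Cuts

lemma sum_ite_sub_le_tv {ι : Type*} [Fintype ι] {P Q : ι → ℝ} (h : ∑ i, P i = ∑ i, Q i)
    (B : ι → Prop) [DecidablePred B] : ∑ i, (if B i then P i - Q i else 0) ≤ tv Q P := by
  -- `[B i] x ≤ (x + |x|) / 2`, and the `x`-parts sum to zero
  have hpt : ∀ i, (if B i then P i - Q i else 0) ≤ (P i - Q i + |Q i - P i|) / 2 := by
    intro i
    rw [abs_sub_comm]
    split_ifs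
    · linarith [le_abs_self (P i - Q i)]
    · linarith [neg_abs_le (P i - Q i)]
  calc _ ≤ ∑ i, (P i - Q i + |Q i - P i|) / 2 := Finset.sum_le_sum fun i _ => hpt i
    _ = tv Q P := by
      rw [← Finset.sum_div, Finset.sum_add_distrib, Finset.sum_sub_distrib, h, sub_self, zero_add,
        tv]

section Projection

variable {Z : Type*} [Fintype Z] (s : Setoid Z) [DecidableEq (Quotient s)]
  [Fintype (Quotient s)]

lemma sum_projQ (f : Z → ℝ) : ∑ k, projQ s f k = ∑ x, f x :=
  Finset.sum_fiberwise univ _ f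

lemma sum_ite_mk_eq_sum_projQ (B : Quotient s → Prop) [DecidablePred B] (f : Z → ℝ) :
    ∑ x, (if B (Quotient.mk s x) then f x else 0) = ∑ k, if B k then projQ s f k else 0 := by
  rw [← Finset.sum_fiberwise univ (Quotient.mk s)]
  refine Finset.sum_congr rfl fun k _ => ?_
  rw [Finset.sum_congr rfl fun x hx => by rw [(mem_filter.1 hx).2], Finset.sum_ite_irrel,
    Finset.sum_const_zero, projQ]

lemma sum_ite_mk_sub_le_tv_projQ {p q : Z → ℝ} (hpq : ∑ x, p x = ∑ x, q x)
    (B : Quotient s → Prop) [DecidablePred B] :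
    ∑ x, (if B (Quotient.mk s x) then p x - q x else 0) ≤ tv (projQ s q) (projQ s p) := by
  have hsub : ∀ k, projQ s (fun x => p x - q x) k = projQ s p k - projQ s q k := fun k =>
    Finset.sum_sub_distrib _ _
  rw [sum_ite_mk_eq_sum_projQ s B fun x => p x - q x]
  simp only [hsub]
  exact sum_ite_sub_le_tv (by rw [sum_projQ, sum_projQ, hpq]) B

end Projection

/-- Bound on mass moved under projection. If
`D_∼ = {(z,z') : z ∼ z'}` is `c`-cyclically monotone, some `c`-optimal coupling
of `p` and `q` moves mass across `∼`-classes with probability at most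
`(|Z/∼| − 1)·‖proj_∼ q − proj_∼ p‖`. -/
theorem mass_moved_bound_quotient {Z : Type*} [Fintype Z] [Nonempty Z]
    (s : Setoid Z) [DecidableRel s.r] [DecidableEq (Quotient s)]
    [Fintype (Quotient s)]
    (c : Z → Z → ℝ) (p q : Z → ℝ) (hp : IsProbVec p) (hq : IsProbVec q)
    (hS : CyclMono c {zz : Z × Z | s.r zz.1 zz.2}) :
    ∃ γ : Z → Z → ℝ, IsOptimalCoupling c γ p q ∧
      1 - ∑ z, ∑ z', (if s.r z z' then γ z z' else 0) ≤
        ((Fintype.card (Quotient s) : ℝ) - 1) * tv (projQ s q) (projQ s p) := by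
  obtain ⟨γ, hopt, φ, hφK, hφ⟩ := exists_isOptimalCoupling_rank s hp hq hS
  refine ⟨γ, hopt, ?_⟩
  set ψ : Z → ℕ := fun x => φ (Quotient.mk s x)
  have hmono : ∀ x y, 0 < γ x y → ψ x ≤ ψ y := fun x y hxy =>
    if hr : s.r x y then (congrArg φ (Quotient.sound hr)).le else (hφ x y hxy hr).le
  have hsplit : ∀ x y,
      γ x y ≤ (if s.r x y then γ x y else 0) + (if ψ x < ψ y then γ x y else 0) := by
    intro x y
    rcases (hopt.1.1 x y).eq_or_lt with h0 | hpos
    · simp [← h0]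
    · by_cases hr : s.r x y
      · simp only [hr, if_true, le_add_iff_nonneg_right]
        split_ifs <;> linarith
      · simp [hr, hφ x y hpos hr, ψ]
  have hmass : ∑ x, ∑ y, γ x y = 1 := by simp only [hopt.1.2.1, hp.2]
  have hK : 1 ≤ Fintype.card (Quotient s) := Fintype.card_pos_iff.2 (.map (Quotient.mk s) ‹_›)
  calc 1 - ∑ x, ∑ y, (if s.r x y then γ x y else 0)
      ≤ ∑ x, ∑ y, (if ψ x < ψ y then γ x y else 0) := by
        rw [← hmass, sub_le_iff_le_add', ← Finset.sum_add_distrib]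
        exact Finset.sum_le_sum fun x _ => (Finset.sum_le_sum fun y _ => hsplit x y).trans_eq
          Finset.sum_add_distrib
    _ ≤ ∑ t ∈ range (Fintype.card (Quotient s) - 1), ∑ x, if ψ x ≤ t then p x - q x else 0 :=
        hopt.1.sum_ite_lt_le ψ (fun x => hφK _) hmono
    _ ≤ ∑ t ∈ range (Fintype.card (Quotient s) - 1), tv (projQ s q) (projQ s p) :=
        Finset.sum_le_sum fun t _ =>
          sum_ite_mk_sub_le_tv_projQ s (hp.2.trans hq.2.symm) fun k => φ k ≤ t
    _ = _ := by rw [Finset.sum_const, card_range, nsmul_eq_mul, Nat.cast_sub hK, Nat.cast_one]
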